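/- arXiv:1905.11866 — 2 statements merged into one kernel-verified Lean document; each statement's English description precedes it below -/
import Mathlib

section
/- Let L : ℕ × ℕ → ℝ, with L(ℓ, 0) = ℓ^(-α) for some α > 0, satisfying L(ℓ + u, 0) ≤ L(ℓ, u) for all ℓ, u ∈ ℕ. Suppose u : ℕ → ℕ is such that L(ℓ, u(ℓ)) / L(ℓ, 0) → 0 as ℓ → ∞. Then u(ℓ)/ℓ → ∞, i.e., u grows superlinearly. -/
/-!
Comparing with a supervised learner on `ℓ + u` labeled examples gives
`L(ℓ, u) / L(ℓ, 0) ≥ ((ℓ + u) / ℓ) ^ (-α) = (1 + u / ℓ) ^ (-α)`. Since `α > 0`, this lower bound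
can only tend to `0` if `1 + u / ℓ` tends to infinity.
-/

open Filter Topology

theorem Filter.Tendsto.atTop_of_rpow_neg_tendsto_zero {ι : Type*} {l : Filter ι} {g : ι → ℝ}
    {α : ℝ} (hα : 0 < α) (hg : ∀ᶠ i in l, 0 < g i)
    (h : Tendsto (fun i => g i ^ (-α)) l (𝓝 0)) : Tendsto g l atTop := by
  have hpow : Tendsto (fun i => g i ^ (-α)) l (𝓝[>] 0) :=
    tendsto_nhdsWithin_iff.mpr ⟨h, hg.mono fun i hi => Real.rpow_pos_of_pos hi _⟩
  have hinv : (-α)⁻¹ < 0 := inv_lt_zero.mpr (neg_neg_of_pos hα)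
  refine ((tendsto_rpow_neg_nhdsGT_zero hinv).comp hpow).congr' ?_
  filter_upwards [hg] with i hi
  exact Real.rpow_rpow_inv hi.le (neg_ne_zero.mpr hα.ne')

theorem one_add_div_rpow_neg_le_risk_ratio (L : ℕ × ℕ → ℝ) (α : ℝ)
    (hrate : ∀ ℓ : ℕ, L (ℓ, 0) = (ℓ : ℝ) ^ (-α))
    (hdiscard : ∀ ℓ u : ℕ, L (ℓ + u, 0) ≤ L (ℓ, u)) {ℓ : ℕ} (hℓ : ℓ ≠ 0) (u : ℕ) :
    (1 + (u : ℝ) / ℓ) ^ (-α) ≤ L (ℓ, u) / L (ℓ, 0) := by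
  have hℓpos : (0 : ℝ) < ℓ := by positivity
  have hsum : 1 + (u : ℝ) / ℓ = ((ℓ + u : ℕ) : ℝ) / ℓ := by
    push_cast
    field_simp
  rw [hsum, Real.div_rpow (by positivity) hℓpos.le, ← hrate, ← hrate]
  exact div_le_div_of_nonneg_right (hdiscard ℓ u) (by rw [hrate]; positivity)

/-- If the SL rate is `ℓ^(-α)` and unlabeled data helps (ratio of SSL to SL
minimax risks tends to 0), then `u` must grow superlinearly. -/
theorem superlinear_unlabeled_needed
    (L : ℕ × ℕ → ℝ) (α : ℝ) (hα : 0 < α)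
    (hrate : ∀ ℓ : ℕ, L (ℓ, 0) = (ℓ : ℝ) ^ (-α))
    (hdiscard : ∀ ℓ u : ℕ, L (ℓ + u, 0) ≤ L (ℓ, u))
    (u : ℕ → ℕ)
    (hhelp : Tendsto (fun ℓ => L (ℓ, u ℓ) / L (ℓ, 0)) atTop (nhds 0)) :
    Tendsto (fun ℓ => (u ℓ : ℝ) / (ℓ : ℝ)) atTop atTop := by
  have hpos : ∀ ℓ : ℕ, 0 < 1 + (u ℓ : ℝ) / ℓ := fun ℓ => by positivity
  have hlower : ∀ᶠ ℓ in atTop, (1 + (u ℓ : ℝ) / ℓ) ^ (-α) ≤ L (ℓ, u ℓ) / L (ℓ, 0) := by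
    filter_upwards [eventually_ne_atTop 0] with ℓ hℓ
    exact one_add_div_rpow_neg_le_risk_ratio L α hrate hdiscard hℓ (u ℓ)
  have hsqueeze : Tendsto (fun ℓ => (1 + (u ℓ : ℝ) / ℓ) ^ (-α)) atTop (𝓝 0) :=
    tendsto_of_tendsto_of_tendsto_of_le_of_le' tendsto_const_nhds hhelp
      (Eventually.of_forall fun ℓ => (Real.rpow_pos_of_pos (hpos ℓ) _).le) hlower
  have hgrow := hsqueeze.atTop_of_rpow_neg_tendsto_zero hα (Eventually.of_forall hpos)
  simpa using tendsto_atTop_add_const_left atTop (-1) hgrow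
end

section
/- Suppose nonincreasing functions e_A, e_B : ℕ → ℝ≥0 bound the per-component expected excess risks (e.g., e_A(m) is an upper bound on expected excess risk of algorithm A_A given m labeled examples). Let ℓ ∈ ℕ be divisible by 4 and let C ~ Binomial(ℓ, 1/2). Then E[(1/2)e_A(C) + (1/2)e_B(ℓ − C)] ≤ 2exp(−ℓ/8) + (1/2)e_A(ℓ/4) + (1/2)e_B(ℓ/4), where we use e_A, e_B ≤ 1. -/
/-!
On the event `ℓ/4 ≤ C ≤ 3ℓ/4` monotonicity bounds the risk by `(e_A(ℓ/4) + e_B(ℓ/4))/2`,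
and elsewhere it is at most `1`. The mass of the bad event is controlled by Chernoff's exponential
tilt: weighting `C(ℓ, k)` by `t^k` with `t = 1/3` (lower tail) and `t = 3` (upper tail) bounds
each tail by `(16/27)^(ℓ/4)`, and `16/27 ≤ e^(-1/2)`.
-/

open Finset

lemma sum_choose_mul_pow_le_one_add_pow {n : ℕ} {s : Finset ℕ} (hs : s ⊆ range (n + 1))
    {t : ℝ} (ht : 0 ≤ t) :
    ∑ k ∈ s, (n.choose k : ℝ) * t ^ k ≤ (1 + t) ^ n := by
  calc ∑ k ∈ s, (n.choose k : ℝ) * t ^ k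
      ≤ ∑ k ∈ range (n + 1), (n.choose k : ℝ) * t ^ k :=
        sum_le_sum_of_subset_of_nonneg hs fun _ _ _ => by positivity
    _ = (1 + t) ^ n := by
        rw [add_comm 1 t, add_pow]
        simp only [one_pow, mul_one, mul_comm]

/-- Chernoff's exponential-moment bound with tilt `t`. -/
lemma pow_mul_sum_choose_le_one_add_pow {n a : ℕ} {s : Finset ℕ} (hs : s ⊆ range (n + 1))
    {t : ℝ} (ht : 0 ≤ t) (htilt : ∀ k ∈ s, t ^ a ≤ t ^ k) :
    t ^ a * ∑ k ∈ s, (n.choose k : ℝ) ≤ (1 + t) ^ n := by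
  calc t ^ a * ∑ k ∈ s, (n.choose k : ℝ)
      = ∑ k ∈ s, (n.choose k : ℝ) * t ^ a := by rw [mul_sum]; simp only [mul_comm]
    _ ≤ ∑ k ∈ s, (n.choose k : ℝ) * t ^ k :=
        sum_le_sum fun k hk => mul_le_mul_of_nonneg_left (htilt k hk) (by positivity)
    _ ≤ (1 + t) ^ n := sum_choose_mul_pow_le_one_add_pow hs ht

lemma sum_choose_filter_lt_mul_half_pow_le (m : ℕ) :
    ∑ k ∈ (range (4 * m + 1)).filter (· < m), ((4 * m).choose k : ℝ) * (1 / 2) ^ (4 * m)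
      ≤ (16 / 27) ^ m := by
  have hchernoff := pow_mul_sum_choose_le_one_add_pow (n := 4 * m) (a := m)
    (s := (range (4 * m + 1)).filter (· < m)) (filter_subset _ _) (t := 1 / 3) (by norm_num)
    fun k hk => pow_le_pow_of_le_one (by norm_num) (by norm_num) (mem_filter.1 hk).2.le
  calc _ = 3 ^ m * ((1 / 3) ^ m * ∑ k ∈ (range (4 * m + 1)).filter (· < m),
          ((4 * m).choose k : ℝ)) * (1 / 2) ^ (4 * m) := by
        rw [← sum_mul, ← mul_assoc, ← mul_pow]; norm_num
    _ ≤ 3 ^ m * (1 + 1 / 3) ^ (4 * m) * (1 / 2) ^ (4 * m) := by gcongr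
    _ = (16 / 27) ^ m := by rw [pow_mul, pow_mul, ← mul_pow, ← mul_pow]; norm_num

lemma sum_choose_filter_gt_mul_half_pow_le (m : ℕ) :
    ∑ k ∈ (range (4 * m + 1)).filter (3 * m < ·), ((4 * m).choose k : ℝ) * (1 / 2) ^ (4 * m)
      ≤ (16 / 27) ^ m := by
  have hchernoff := pow_mul_sum_choose_le_one_add_pow (n := 4 * m) (a := 3 * m)
    (s := (range (4 * m + 1)).filter (3 * m < ·)) (filter_subset _ _) (t := 3) (by norm_num)
    fun k hk => pow_le_pow_right₀ (by norm_num) (mem_filter.1 hk).2.le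
  calc _ = (1 / 3) ^ (3 * m) * (3 ^ (3 * m) * ∑ k ∈ (range (4 * m + 1)).filter (3 * m < ·),
          ((4 * m).choose k : ℝ)) * (1 / 2) ^ (4 * m) := by
        rw [← sum_mul, ← mul_assoc, ← mul_pow]; norm_num
    _ ≤ (1 / 3) ^ (3 * m) * (1 + 3) ^ (4 * m) * (1 / 2) ^ (4 * m) := by gcongr
    _ = (16 / 27) ^ m := by rw [pow_mul, pow_mul, pow_mul, ← mul_pow, ← mul_pow]; norm_num

lemma sixteen_div_twentyseven_le_exp_neg_half : (16 / 27 : ℝ) ≤ Real.exp (-(1 / 2)) := by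
  have hsq : Real.exp (1 / 2) * Real.exp (1 / 2) = Real.exp 1 := by
    rw [← Real.exp_add]; norm_num
  have hpos := Real.exp_pos (1 / 2)
  have hle : Real.exp (1 / 2) ≤ 27 / 16 := by nlinarith [Real.exp_one_lt_d9]
  rw [Real.exp_neg, le_inv_comm₀ (by norm_num) hpos]
  linarith

lemma sum_choose_filter_tails_mul_half_pow_le (m : ℕ) :
    ∑ k ∈ (range (4 * m + 1)).filter (fun k => k < m ∨ 3 * m < k),
        ((4 * m).choose k : ℝ) * (1 / 2) ^ (4 * m)
      ≤ 2 * Real.exp (-((4 * m : ℕ) : ℝ) / 8) := by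
  have hdisj : Disjoint ((range (4 * m + 1)).filter (· < m))
      ((range (4 * m + 1)).filter (3 * m < ·)) :=
    disjoint_filter.2 fun _ _ _ => by omega
  have hexp : (16 / 27 : ℝ) ^ m ≤ Real.exp (-((4 * m : ℕ) : ℝ) / 8) := by
    calc (16 / 27 : ℝ) ^ m ≤ Real.exp (-(1 / 2)) ^ m := by
          gcongr; exact sixteen_div_twentyseven_le_exp_neg_half
      _ = Real.exp (-((4 * m : ℕ) : ℝ) / 8) := by
          rw [← Real.exp_nat_mul]; push_cast; ring_nf
  rw [filter_or, sum_union hdisj]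
  linarith [sum_choose_filter_lt_mul_half_pow_le m, sum_choose_filter_gt_mul_half_pow_le m]

lemma sum_mul_le_mul_sum_add_sum_filter {ι : Type*} {s : Finset ι} {w f : ι → ℝ} {c : ℝ}
    (bad : ι → Prop) [DecidablePred bad] (hw : ∀ i ∈ s, 0 ≤ w i) (hc : 0 ≤ c)
    (hgood : ∀ i ∈ s, ¬bad i → f i ≤ c) (hle_one : ∀ i ∈ s, f i ≤ 1) :
    ∑ i ∈ s, w i * f i ≤ c * ∑ i ∈ s, w i + ∑ i ∈ s.filter bad, w i := by
  calc ∑ i ∈ s, w i * f i ≤ ∑ i ∈ s, w i * (c + if bad i then 1 else 0) := by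
        refine sum_le_sum fun i hi => mul_le_mul_of_nonneg_left ?_ (hw i hi)
        split_ifs with hbad
        · linarith [hle_one i hi]
        · linarith [hgood i hi hbad]
    _ = c * ∑ i ∈ s, w i + ∑ i ∈ s.filter bad, w i := by
        simp only [mul_add, mul_ite, mul_one, mul_zero, sum_add_distrib, ← sum_filter,
          mul_sum, mul_comm]

/-- Core computation in the mixture upper bound (Lemma B.2): splitting on the bad
event that one component receives fewer than `ℓ/4` of the `ℓ` samples. -/
theorem mixture_binomial_expectation_bound
    (e_A e_B : ℕ → ℝ) (hA_mono : Antitone e_A) (hB_mono : Antitone e_B)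
    (hA0 : ∀ m, 0 ≤ e_A m) (hB0 : ∀ m, 0 ≤ e_B m)
    (hA1 : ∀ m, e_A m ≤ 1) (hB1 : ∀ m, e_B m ≤ 1)
    (ℓ : ℕ) (hdiv : 4 ∣ ℓ) :
    ∑ k ∈ Finset.range (ℓ + 1),
      (ℓ.choose k : ℝ) * (1 / 2) ^ ℓ * ((1 / 2) * e_A k + (1 / 2) * e_B (ℓ - k))
    ≤ 2 * Real.exp (-(ℓ : ℝ) / 8) + (1 / 2) * e_A (ℓ / 4) + (1 / 2) * e_B (ℓ / 4) := by
  obtain ⟨m, rfl⟩ := hdiv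
  rw [Nat.mul_div_cancel_left m (by norm_num)]
  have hweights :
      ∑ k ∈ range (4 * m + 1), ((4 * m).choose k : ℝ) * (1 / 2) ^ (4 * m) = 1 := by
    rw [← sum_mul, ← Nat.cast_sum, Nat.sum_range_choose, Nat.cast_pow, ← mul_pow]; norm_num
  have hsplit := sum_mul_le_mul_sum_add_sum_filter (s := range (4 * m + 1))
    (w := fun k => ((4 * m).choose k : ℝ) * (1 / 2) ^ (4 * m))
    (f := fun k => (1 / 2) * e_A k + (1 / 2) * e_B (4 * m - k))
    (c := (1 / 2) * e_A m + (1 / 2) * e_B m) (fun k => k < m ∨ 3 * m < k)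
    (fun k _ => by positivity) (by linarith [hA0 m, hB0 m])
    (fun k hk hk_good => by
      have := hA_mono (show m ≤ k by omega)
      have := hB_mono (show m ≤ 4 * m - k by simp only [mem_range] at hk; omega)
      linarith)
    (fun k _ => by linarith [hA1 k, hB1 (4 * m - k)])
  rw [hweights, mul_one] at hsplit
  linarith [sum_choose_filter_tails_mul_half_pow_le m]
end
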